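/- The Minkowski type function M_π is nowhere monotonic on [0,1): for every nondegenerate subinterval I of [0,1), the restriction of M_π to I is neither monotone nondecreasing nor monotone nonincreasing; that is, there exist points y_1 < y_2 in I with M_π(y_1) < M_π(y_2) and points z_1 < z_2 in I with M_π(z_1) > M_π(z_2). -/

import Mathlib

open scoped BigOperators
open MeasureTheory

/-- `p̂_j = p_1 + ⋯ + p_{j-1}` (so `p̂_1 = 0`). -/
noncomputable def phat (p : ℕ → ℝ) (j : ℕ) : ℝ := ∑ m ∈ Finset.Ico 1 j, p m

/-- The expansion `π_P((i_k)) = p̂_{i_1} + ∑_{k≥1} p̂_{i_{k+1}} · p_{i_1} ⋯ p_{i_k}`,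
with the digit sequence `i : ℕ → ℕ` indexed from 0 (so `i 0 = i_1`). -/
noncomputable def piP (p : ℕ → ℝ) (i : ℕ → ℕ) : ℝ :=
  phat p (i 0) + ∑' k : ℕ, phat p (i (k + 1)) * ∏ m ∈ Finset.range (k + 1), p (i m)

/-- The value `∑_{k≥1} (−1)^{k−1} 2^{1−(i_1+⋯+i_k)}` of the Minkowski type function
on the point with digit sequence `i` (indexed from 0). -/
noncomputable def Mseq (i : ℕ → ℕ) : ℝ :=
  ∑' k : ℕ, (-1 : ℝ) ^ k * (2 : ℝ) ^ ((1 : ℤ) - ∑ m ∈ Finset.range (k + 1), (i m : ℤ))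

/-!
Every subinterval of `[0,1)` contains a cylinder `[c, c + L)`, the set of points whose first `n`
digits form a fixed word `w`: the greedy digits of its midpoint give cylinders of length
`∏ p_{w_m} ≤ qⁿ`, where `q = max p₁ (1 - p₁) < 1` bounds every `p_j`. Prefixing `w` acts
affinely on both sides: `π_P(w t) = c + L · π_P(t)` and `M_π(w t) = G + s · M_π(t)` with
`s = ±2^{-(w_1 + ⋯ + w_n)} ≠ 0`. The tails `1 1 1 …`, `1 2 1 1 …`, `2 1 1 …` sit at
`0 < p₁² < p₁` and have `M_π`-values `2/3, 5/6, 1/3`, so their images in the cylinder form a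
peak or a valley of `M_π` according to the sign of `s`.
-/

open Finset Filter Topology

section Splice

variable {α : Type*}

def splice (w : ℕ → α) (n : ℕ) (t : ℕ → α) : ℕ → α :=
  fun k => if k < n then w k else t (k - n)

theorem splice_of_lt {w t : ℕ → α} {n k : ℕ} (hk : k < n) : splice w n t k = w k :=
  if_pos hk

@[simp]
theorem splice_add (w t : ℕ → α) (n k : ℕ) : splice w n t (n + k) = t k := by
  simp [splice]

theorem splice_const_self (a : α) (n : ℕ) : splice (fun _ => a) n (fun _ => a) = fun _ => a := by
  ext k
  simp [splice]

theorem one_le_splice {w t : ℕ → ℕ} (hw : ∀ k, 1 ≤ w k) (ht : ∀ k, 1 ≤ t k) (n k : ℕ) :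
    1 ≤ splice w n t k := by
  unfold splice
  split_ifs
  exacts [hw k, ht _]

@[to_additive]
theorem prod_range_splice_of_le {M : Type*} [CommMonoid M] (f : α → M) (w t : ℕ → α)
    {n k : ℕ} (hk : k ≤ n) : ∏ m ∈ range k, f (splice w n t m) = ∏ m ∈ range k, f (w m) :=
  prod_congr rfl fun m hm => by rw [splice_of_lt ((mem_range.1 hm).trans_le hk)]

@[to_additive]
theorem prod_range_add_splice {M : Type*} [CommMonoid M] (f : α → M) (w t : ℕ → α) (n k : ℕ) :
    ∏ m ∈ range (n + k), f (splice w n t m) =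
      (∏ m ∈ range n, f (w m)) * ∏ m ∈ range k, f (t m) := by
  rw [prod_range_add, prod_range_splice_of_le f w t le_rfl]
  simp only [splice_add]

end Splice

section Phat

variable (p : ℕ → ℝ)

theorem phat_one : phat p 1 = 0 := by
  simp [phat]

theorem phat_two : phat p 2 = p 1 := by
  simp [phat]

theorem phat_succ {j : ℕ} (hj : 1 ≤ j) : phat p (j + 1) = phat p j + p j :=
  sum_Ico_succ_top hj p

theorem phat_eq_sum_range (j : ℕ) : phat p j = ∑ k ∈ range (j - 1), p (k + 1) := by
  simp [phat, sum_Ico_eq_sum_range, add_comm]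

variable {p}

theorem hasSum_p_succ (hpsum : ∑' j : ℕ, p (j + 1) = 1) : HasSum (fun j => p (j + 1)) 1 := by
  by_cases h : Summable fun j => p (j + 1)
  · exact hpsum ▸ h.hasSum
  · simp [tsum_eq_zero_of_not_summable h] at hpsum

theorem phat_nonneg (hp : ∀ j, 1 ≤ j → 0 < p j ∧ p j < 1) (j : ℕ) : 0 ≤ phat p j :=
  sum_nonneg fun m hm => (hp m (mem_Ico.1 hm).1).1.le

theorem phat_le_one (hp : ∀ j, 1 ≤ j → 0 < p j ∧ p j < 1) (hpsum : ∑' j : ℕ, p (j + 1) = 1)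
    (j : ℕ) : phat p j ≤ 1 := by
  rw [phat_eq_sum_range, ← (hasSum_p_succ hpsum).tsum_eq]
  exact (hasSum_p_succ hpsum).summable.sum_le_tsum _ fun k _ => (hp _ (by omega)).1.le

theorem exists_lt_one_forall_le (hp : ∀ j, 1 ≤ j → 0 < p j ∧ p j < 1)
    (hpsum : ∑' j : ℕ, p (j + 1) = 1) : ∃ q < 1, ∀ j, 1 ≤ j → p j ≤ q := by
  refine ⟨max (p 1) (1 - p 1), max_lt (hp 1 le_rfl).2 (by linarith [(hp 1 le_rfl).1]), ?_⟩
  intro j hj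
  rcases hj.eq_or_lt with rfl | hj
  · exact le_max_left _ _
  · have hsub : p 1 + p j ≤ phat p (j + 1) := by
      rw [← sum_pair hj.ne]
      refine sum_le_sum_of_subset_of_nonneg (fun m => ?_) fun m hm _ => (hp m (mem_Ico.1 hm).1).1.le
      simp only [mem_insert, mem_singleton, mem_Ico]
      omega
    exact le_max_of_le_right (by linarith [phat_le_one hp hpsum (j + 1)])

theorem exists_phat_le_lt (hpsum : ∑' j : ℕ, p (j + 1) = 1) {x : ℝ} (hx0 : 0 ≤ x) (hx1 : x < 1) :
    ∃ j, 1 ≤ j ∧ phat p j ≤ x ∧ x < phat p j + p j := by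
  classical
  have hlim : Tendsto (fun j => phat p (j + 1)) atTop (𝓝 1) := by
    simpa only [phat_eq_sum_range, Nat.add_sub_cancel] using (hasSum_p_succ hpsum).tendsto_sum_nat
  have hex : ∃ j, x < phat p (j + 1) := (hlim.eventually_const_lt hx1).exists
  have hj : 1 ≤ Nat.find hex := by
    by_contra! h
    have := Nat.find_spec hex
    rw [Nat.lt_one_iff.1 h, phat_one] at this
    linarith
  refine ⟨Nat.find hex, hj, ?_, phat_succ p hj ▸ Nat.find_spec hex⟩
  have := Nat.find_min hex (Nat.sub_one_lt_of_lt hj)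
  rwa [not_lt, Nat.sub_add_cancel hj] at this

end Phat

section Cylinder

variable (p : ℕ → ℝ)

def cylinderLength (i : ℕ → ℕ) (n : ℕ) : ℝ := ∏ m ∈ range n, p (i m)

noncomputable def piPTerm (i : ℕ → ℕ) (k : ℕ) : ℝ := phat p (i k) * cylinderLength p i k

noncomputable def cylinderStart (i : ℕ → ℕ) (n : ℕ) : ℝ := ∑ k ∈ range n, piPTerm p i k

variable {p}

theorem piP_eq_tsum {i : ℕ → ℕ} (h : Summable (piPTerm p i)) :
    piP p i = ∑' k, piPTerm p i k := by
  rw [h.tsum_eq_zero_add]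
  simp [piP, piPTerm, cylinderLength]

theorem cylinderLength_pos (hp : ∀ j, 1 ≤ j → 0 < p j ∧ p j < 1) {i : ℕ → ℕ}
    (hi : ∀ k, 1 ≤ i k) (n : ℕ) : 0 < cylinderLength p i n :=
  prod_pos fun m _ => (hp _ (hi m)).1

theorem cylinderLength_le_pow (hp : ∀ j, 1 ≤ j → 0 < p j ∧ p j < 1) {q : ℝ}
    (hq : ∀ j, 1 ≤ j → p j ≤ q) {i : ℕ → ℕ} (hi : ∀ k, 1 ≤ i k) (n : ℕ) :
    cylinderLength p i n ≤ q ^ n := by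
  calc cylinderLength p i n ≤ ∏ _m ∈ range n, q :=
        prod_le_prod (fun m _ => (hp _ (hi m)).1.le) fun m _ => hq _ (hi m)
    _ = q ^ n := by rw [prod_const, card_range]

theorem summable_piPTerm (hp : ∀ j, 1 ≤ j → 0 < p j ∧ p j < 1)
    (hpsum : ∑' j : ℕ, p (j + 1) = 1) {i : ℕ → ℕ} (hi : ∀ k, 1 ≤ i k) :
    Summable (piPTerm p i) := by
  obtain ⟨q, hq1, hq⟩ := exists_lt_one_forall_le hp hpsum
  have hq0 : 0 ≤ q := (hp 1 le_rfl).1.le.trans (hq 1 le_rfl)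
  refine (summable_geometric_of_lt_one hq0 hq1).of_nonneg_of_le
    (fun k => mul_nonneg (phat_nonneg hp _) (cylinderLength_pos hp hi k).le) fun k => ?_
  calc piPTerm p i k ≤ 1 * q ^ k :=
        mul_le_mul (phat_le_one hp hpsum _) (cylinderLength_le_pow hp hq hi k)
          (cylinderLength_pos hp hi k).le zero_le_one
    _ = q ^ k := one_mul _

@[simp]
theorem cylinderLength_one (i : ℕ → ℕ) : cylinderLength p i 1 = p (i 0) := by
  simp [cylinderLength]

@[simp]
theorem cylinderStart_one (i : ℕ → ℕ) : cylinderStart p i 1 = phat p (i 0) := by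
  simp [cylinderStart, piPTerm, cylinderLength]

variable (w t : ℕ → ℕ) {n : ℕ}

theorem cylinderLength_splice_add (k : ℕ) :
    cylinderLength p (splice w n t) (n + k) = cylinderLength p w n * cylinderLength p t k :=
  prod_range_add_splice p w t n k

theorem piPTerm_splice_of_lt {k : ℕ} (hk : k < n) :
    piPTerm p (splice w n t) k = piPTerm p w k := by
  rw [piPTerm, piPTerm, splice_of_lt hk, cylinderLength, cylinderLength,
    prod_range_splice_of_le p w t hk.le]

theorem piPTerm_splice_add (k : ℕ) :
    piPTerm p (splice w n t) (n + k) = cylinderLength p w n * piPTerm p t k := by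
  rw [piPTerm, piPTerm, splice_add, cylinderLength_splice_add]
  ring

theorem cylinderStart_splice_add (N : ℕ) :
    cylinderStart p (splice w n t) (n + N) =
      cylinderStart p w n + cylinderLength p w n * cylinderStart p t N := by
  rw [cylinderStart, sum_range_add, cylinderStart, cylinderStart, mul_sum]
  congr 1
  exacts [sum_congr rfl fun k hk => piPTerm_splice_of_lt w t (mem_range.1 hk),
    sum_congr rfl fun k _ => piPTerm_splice_add w t k]

theorem piP_splice {t : ℕ → ℕ} (ht : Summable (piPTerm p t)) :
    piP p (splice w n t) = cylinderStart p w n + cylinderLength p w n * piP p t := by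
  have htail : (fun k => piPTerm p (splice w n t) (k + n)) =
      fun k => cylinderLength p w n * piPTerm p t k := by
    ext k
    rw [add_comm, piPTerm_splice_add]
  have hs : Summable (piPTerm p (splice w n t)) :=
    (summable_nat_add_iff n).1 (htail ▸ ht.mul_left _)
  rw [piP_eq_tsum hs, piP_eq_tsum ht, ← hs.sum_add_tsum_nat_add n, htail, tsum_mul_left,
    cylinderStart]
  congr 1
  exact sum_congr rfl fun k hk => piPTerm_splice_of_lt w t (mem_range.1 hk)

theorem piP_const_one : piP p (fun _ => 1) = 0 := by
  simp [piP, phat_one]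

theorem piP_cons (j : ℕ) {t : ℕ → ℕ} (ht : Summable (piPTerm p t)) :
    piP p (splice (fun _ => j) 1 t) = phat p j + p j * piP p t := by
  rw [piP_splice _ ht, cylinderStart_one, cylinderLength_one]

end Cylinder

theorem exists_mem_cylinder {p : ℕ → ℝ} (hp : ∀ j, 1 ≤ j → 0 < p j ∧ p j < 1)
    (hpsum : ∑' j : ℕ, p (j + 1) = 1) (n : ℕ) {x : ℝ} (hx0 : 0 ≤ x) (hx1 : x < 1) :
    ∃ w : ℕ → ℕ, (∀ k, 1 ≤ w k) ∧
      cylinderStart p w n ≤ x ∧ x < cylinderStart p w n + cylinderLength p w n := by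
  induction n generalizing x with
  | zero => exact ⟨fun _ => 1, fun _ => le_rfl, by simp [cylinderStart, cylinderLength, hx0, hx1]⟩
  | succ n ih =>
    obtain ⟨j, hj, hjx, hxj⟩ := exists_phat_le_lt hpsum hx0 hx1
    have hpj := (hp j hj).1
    obtain ⟨w, hw, hlo, hhi⟩ := ih (x := (x - phat p j) / p j)
      (div_nonneg (by linarith) hpj.le) (by rw [div_lt_one hpj]; linarith)
    rw [le_div_iff₀ hpj] at hlo
    rw [div_lt_iff₀ hpj] at hhi
    refine ⟨splice (fun _ => j) 1 w, one_le_splice (fun _ => hj) hw 1, ?_⟩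
    rw [add_comm n 1, cylinderStart_splice_add, cylinderLength_splice_add, cylinderStart_one,
      cylinderLength_one]
    constructor <;> linarith

theorem exists_cylinder_subset_Ioo {p : ℕ → ℝ} (hp : ∀ j, 1 ≤ j → 0 < p j ∧ p j < 1)
    (hpsum : ∑' j : ℕ, p (j + 1) = 1) {a b : ℝ} (ha : 0 ≤ a) (hab : a < b) (hb : b ≤ 1) :
    ∃ (w : ℕ → ℕ) (n : ℕ), (∀ k, 1 ≤ w k) ∧
      Set.Ico (cylinderStart p w n) (cylinderStart p w n + cylinderLength p w n) ⊆ Set.Ioo a b := by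
  obtain ⟨q, hq1, hq⟩ := exists_lt_one_forall_le hp hpsum
  obtain ⟨n, hn⟩ := exists_pow_lt_of_lt_one (half_pos (sub_pos.2 hab)) hq1
  obtain ⟨w, hw, hlo, hhi⟩ :=
    exists_mem_cylinder hp hpsum n (x := (a + b) / 2) (by linarith) (by linarith)
  have hlen := cylinderLength_le_pow hp hq hw n
  exact ⟨w, n, hw, fun y hy => ⟨by linarith [hy.1], by linarith [hy.2]⟩⟩

section Minkowski

noncomputable def mseqTerm (i : ℕ → ℕ) (k : ℕ) : ℝ :=
  (-1) ^ k * (2 : ℝ) ^ ((1 : ℤ) - ∑ m ∈ range (k + 1), (i m : ℤ))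

theorem summable_mseqTerm {i : ℕ → ℕ} (hi : ∀ k, 1 ≤ i k) : Summable (mseqTerm i) := by
  refine (summable_geometric_two).of_norm_bounded fun k => ?_
  have hsum : (k : ℤ) + 1 ≤ ∑ m ∈ range (k + 1), (i m : ℤ) := by
    simpa using sum_le_sum fun m (_ : m ∈ range (k + 1)) => (by exact_mod_cast hi m : (1 : ℤ) ≤ i m)
  rw [mseqTerm, norm_mul, norm_pow, norm_neg, norm_one, one_pow, one_mul,
    Real.norm_of_nonneg (by positivity), one_div, inv_pow, ← zpow_natCast, ← zpow_neg]
  exact zpow_le_zpow_right₀ one_le_two (by omega)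

variable (w t : ℕ → ℕ) {n : ℕ}

theorem mseqTerm_splice_of_lt {k : ℕ} (hk : k < n) :
    mseqTerm (splice w n t) k = mseqTerm w k := by
  rw [mseqTerm, mseqTerm, sum_range_splice_of_le _ w t hk]

theorem mseqTerm_splice_add (k : ℕ) :
    mseqTerm (splice w n t) (n + k) =
      (-1) ^ n * (2 : ℝ) ^ (-∑ m ∈ range n, (w m : ℤ)) * mseqTerm t k := by
  rw [mseqTerm, mseqTerm, add_assoc, sum_range_add_splice (Nat.cast : ℕ → ℤ),
    show (1 : ℤ) - (∑ m ∈ range n, (w m : ℤ) + ∑ m ∈ range (k + 1), (t m : ℤ)) =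
      -∑ m ∈ range n, (w m : ℤ) + (1 - ∑ m ∈ range (k + 1), (t m : ℤ)) by ring,
    zpow_add₀ two_ne_zero, pow_add]
  ring

theorem Mseq_splice {t : ℕ → ℕ} (ht : Summable (mseqTerm t)) :
    Mseq (splice w n t) = ∑ k ∈ range n, mseqTerm w k +
      (-1) ^ n * (2 : ℝ) ^ (-∑ m ∈ range n, (w m : ℤ)) * Mseq t := by
  have htail : (fun k => mseqTerm (splice w n t) (k + n)) =
      fun k => (-1) ^ n * (2 : ℝ) ^ (-∑ m ∈ range n, (w m : ℤ)) * mseqTerm t k := by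
    ext k
    rw [add_comm, mseqTerm_splice_add]
  have hs : Summable (mseqTerm (splice w n t)) :=
    (summable_nat_add_iff n).1 (htail ▸ ht.mul_left _)
  change ∑' k, mseqTerm _ k = _ + _ * ∑' k, mseqTerm t k
  rw [← hs.sum_add_tsum_nat_add n, htail, tsum_mul_left]
  congr 1
  exact sum_congr rfl fun k hk => mseqTerm_splice_of_lt w t (mem_range.1 hk)

theorem Mseq_cons (j : ℕ) {t : ℕ → ℕ} (ht : Summable (mseqTerm t)) :
    Mseq (splice (fun _ => j) 1 t) = (2 : ℝ) ^ (1 - (j : ℤ)) - (2 : ℝ) ^ (-(j : ℤ)) * Mseq t := by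
  rw [Mseq_splice _ ht]
  simp [mseqTerm, sub_eq_add_neg]

theorem Mseq_const_one : Mseq (fun _ => 1) = 2 / 3 := by
  have h := Mseq_cons 1 (summable_mseqTerm fun _ => le_rfl)
  rw [splice_const_self] at h
  norm_num at h
  linarith

end Minkowski

theorem exists_zigzag_tails {p : ℕ → ℝ} (hp : ∀ j, 1 ≤ j → 0 < p j ∧ p j < 1)
    (hpsum : ∑' j : ℕ, p (j + 1) = 1) :
    ∃ t₀ t₁ t₂ : ℕ → ℕ, (∀ k, 1 ≤ t₀ k) ∧ (∀ k, 1 ≤ t₁ k) ∧ (∀ k, 1 ≤ t₂ k) ∧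
      piP p t₀ = 0 ∧ piP p t₁ = p 1 ^ 2 ∧ piP p t₂ = p 1 ∧
      Mseq t₀ = 2 / 3 ∧ Mseq t₁ = 5 / 6 ∧ Mseq t₂ = 1 / 3 := by
  have h₀ : ∀ k, 1 ≤ (fun _ => 1 : ℕ → ℕ) k := fun _ => le_rfl
  have h₂ := one_le_splice (fun _ => one_le_two) h₀ 1
  have h₁ := one_le_splice h₀ h₂ 1
  have hpi₂ : piP p (splice (fun _ => 2) 1 fun _ => 1) = p 1 := by
    rw [piP_cons 2 (summable_piPTerm hp hpsum h₀), piP_const_one, phat_two, mul_zero, add_zero]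
  have hM₂ : Mseq (splice (fun _ => 2) 1 fun _ => 1) = 1 / 3 := by
    rw [Mseq_cons 2 (summable_mseqTerm h₀), Mseq_const_one]
    norm_num
  refine ⟨_, _, _, h₀, h₁, h₂, piP_const_one, ?_, hpi₂, Mseq_const_one, ?_, hM₂⟩
  · rw [piP_cons 1 (summable_piPTerm hp hpsum h₂), hpi₂, phat_one]
    ring
  · rw [Mseq_cons 1 (summable_mseqTerm h₂), hM₂]
    norm_num

theorem exists_dent_in_cylinder {p : ℕ → ℝ} (hp : ∀ j, 1 ≤ j → 0 < p j ∧ p j < 1)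
    (hpsum : ∑' j : ℕ, p (j + 1) = 1) {M : ℝ → ℝ}
    (hM : ∀ i : ℕ → ℕ, (∀ k, 1 ≤ i k) → M (piP p i) = Mseq i)
    {w : ℕ → ℕ} (hw : ∀ k, 1 ≤ w k) (n : ℕ) :
    ∃ᵉ (u₀ ∈ Set.Ico (cylinderStart p w n) (cylinderStart p w n + cylinderLength p w n))
      (u₁ ∈ Set.Ico (cylinderStart p w n) (cylinderStart p w n + cylinderLength p w n))
      (u₂ ∈ Set.Ico (cylinderStart p w n) (cylinderStart p w n + cylinderLength p w n)),
      u₀ < u₁ ∧ u₁ < u₂ ∧ (M u₀ < M u₁ ∧ M u₂ < M u₁ ∨ M u₁ < M u₀ ∧ M u₁ < M u₂) := by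
  set c := cylinderStart p w n
  set L := cylinderLength p w n
  set s : ℝ := (-1) ^ n * (2 : ℝ) ^ (-∑ m ∈ range n, (w m : ℤ))
  have hL : 0 < L := cylinderLength_pos hp hw n
  have hs : s ≠ 0 := mul_ne_zero (pow_ne_zero _ (by norm_num)) (zpow_ne_zero _ two_ne_zero)
  have hval : ∀ t : ℕ → ℕ, (∀ k, 1 ≤ t k) →
      M (c + L * piP p t) = ∑ k ∈ range n, mseqTerm w k + s * Mseq t := fun t ht => by
    rw [← piP_splice w (summable_piPTerm hp hpsum ht), hM _ (one_le_splice hw ht n),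
      Mseq_splice w (summable_mseqTerm ht)]
  have hmem : ∀ x, 0 ≤ x → x < 1 → c + L * x ∈ Set.Ico c (c + L) := fun x hx0 hx1 =>
    ⟨by nlinarith, by nlinarith⟩
  obtain ⟨t₀, t₁, t₂, h₀, h₁, h₂, hpi₀, hpi₁, hpi₂, hM₀, hM₁, hM₂⟩ := exists_zigzag_tails hp hpsum
  obtain ⟨hp₁, hp₁'⟩ := hp 1 le_rfl
  have hsq : p 1 ^ 2 < p 1 := by nlinarith
  refine ⟨_, hmem (piP p t₀) (by rw [hpi₀]) (by rw [hpi₀]; exact one_pos),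
    _, hmem (piP p t₁) (by rw [hpi₁]; positivity) (by rw [hpi₁]; linarith),
    _, hmem (piP p t₂) (by rw [hpi₂]; exact hp₁.le) (by rw [hpi₂]; exact hp₁'),
    by rw [hpi₀, hpi₁]; gcongr; positivity, by rw [hpi₁, hpi₂]; gcongr, ?_⟩
  rw [hval t₀ h₀, hval t₁ h₁, hval t₂ h₂, hM₀, hM₁, hM₂]
  rcases hs.lt_or_gt with hs | hs
  · right
    constructor <;> linarith
  · left
    constructor <;> linarith

/-- `M_π` is nowhere monotonic on `[0,1)`: every nondegenerate subinterval of `[0,1)`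
(equivalently, every open interval `(a,b)` with `0 ≤ a < b ≤ 1`) contains points
`y₁ < y₂` with `M_π(y₁) < M_π(y₂)` and points `z₁ < z₂` with `M_π(z₁) > M_π(z₂)`. -/
theorem stmt9 (p : ℕ → ℝ) (hp : ∀ j, 1 ≤ j → 0 < p j ∧ p j < 1)
    (hpsum : ∑' j : ℕ, p (j + 1) = 1)
    (M : ℝ → ℝ)
    (hM : ∀ i : ℕ → ℕ, (∀ k, 1 ≤ i k) → M (piP p i) = Mseq i)
    (a b : ℝ) (ha : 0 ≤ a) (hab : a < b) (hb : b ≤ 1) :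
    (∃ y₁ y₂ : ℝ, y₁ ∈ Set.Ioo a b ∧ y₂ ∈ Set.Ioo a b ∧ y₁ < y₂ ∧ M y₁ < M y₂) ∧
    (∃ z₁ z₂ : ℝ, z₁ ∈ Set.Ioo a b ∧ z₂ ∈ Set.Ioo a b ∧ z₁ < z₂ ∧ M z₂ < M z₁) := by
  obtain ⟨w, n, hw, hsub⟩ := exists_cylinder_subset_Ioo hp hpsum ha hab hb
  obtain ⟨u₀, h₀, u₁, h₁, u₂, h₂, h01, h12, hdent⟩ := exists_dent_in_cylinder hp hpsum hM hw n
  rcases hdent with ⟨hup, hdown⟩ | ⟨hdown, hup⟩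
  · exact ⟨⟨u₀, u₁, hsub h₀, hsub h₁, h01, hup⟩, ⟨u₁, u₂, hsub h₁, hsub h₂, h12, hdown⟩⟩
  · exact ⟨⟨u₁, u₂, hsub h₁, hsub h₂, h12, hup⟩, ⟨u₀, u₁, hsub h₀, hsub h₁, h01, hdown⟩⟩
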